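/- arXiv:2208.00418 — 5 statements merged into one kernel-verified Lean document; each statement's English description precedes it below -/
import Mathlib

section
/- For every α with 0 < α < 1, the inequality 8^α − 13^α + 20^α − 17^α < 0 holds. -/
open Real

theorem stmt_3 (α : ℝ) (hα0 : 0 < α) (hα1 : α < 1) :
    (8 : ℝ) ^ α - 13 ^ α + 20 ^ α - 17 ^ α < 0 := by
  have hsc := Real.strictConcaveOn_rpow hα0 hα1
  have h8 : (8 : ℝ) ∈ Set.Ici (0:ℝ) := by norm_num
  have h20 : (20 : ℝ) ∈ Set.Ici (0:ℝ) := by norm_num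
  have hne : (8 : ℝ) ≠ 20 := by norm_num
  have h13 := hsc.2 h8 h20 hne (show (0:ℝ) < 7/12 by norm_num) (show (0:ℝ) < 5/12 by norm_num) (by norm_num)
  have h17 := hsc.2 h8 h20 hne (show (0:ℝ) < 1/4 by norm_num) (show (0:ℝ) < 3/4 by norm_num) (by norm_num)
  have e13 : (7/12 : ℝ) • (8:ℝ) + (5/12 : ℝ) • (20:ℝ) = 13 := by norm_num
  have e17 : (1/4 : ℝ) • (8:ℝ) + (3/4 : ℝ) • (20:ℝ) = 17 := by norm_num
  rw [e13] at h13
  rw [e17] at h17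
  simp only [smul_eq_mul] at h13 h17
  have hmono : (8:ℝ) ^ α < 20 ^ α := Real.rpow_lt_rpow (by norm_num) (by norm_num) hα0
  linarith
end

section
/- For every α with 0 < α < 1, the inequality 10^α − 5^α + 2·13^α + 2·8^α − 3·20^α − 17^α < 0 holds. -/
/-!
Write the left-hand side as
`(10^α - 5^α) - (20^α - 10^α) + 2 (13^α - 20^α) + (8^α - 10^α) + (8^α - 17^α)`.
Since `20^α - 10^α = 2^α (10^α - 5^α)` with `2^α ≥ 1`, the first pair is `≤ 0`; the remaining
differences are non-positive, and strictly negative once `α > 0`, by monotonicity of `t ↦ t^α`.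
-/

open Real

lemma rpow_sub_rpow_le_mul_rpow_sub_mul_rpow {α a b c : ℝ} (hα : 0 ≤ α) (ha : 0 ≤ a)
    (hab : a ≤ b) (hc : 1 ≤ c) : b ^ α - a ^ α ≤ (c * b) ^ α - (c * a) ^ α := by
  rw [mul_rpow (by linarith) (by linarith), mul_rpow (by linarith) ha, ← mul_sub]
  exact le_mul_of_one_le_left (sub_nonneg.2 (rpow_le_rpow ha hab hα)) (one_le_rpow hc hα)

theorem stmt_5_general (α : ℝ) (hα0 : 0 < α) :
    (10 : ℝ) ^ α - 5 ^ α + 2 * 13 ^ α + 2 * 8 ^ α - 3 * 20 ^ α - 17 ^ α < 0 := by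
  have h10_5 : (10 : ℝ) ^ α - 5 ^ α ≤ 20 ^ α - 10 ^ α := by
    have h := rpow_sub_rpow_le_mul_rpow_sub_mul_rpow (a := 5) (b := 10) (c := 2) hα0.le
      (by norm_num) (by norm_num) (by norm_num)
    rwa [show (2 : ℝ) * 10 = 20 by norm_num, show (2 : ℝ) * 5 = 10 by norm_num] at h
  have h13 : (13 : ℝ) ^ α ≤ 20 ^ α := rpow_le_rpow (by norm_num) (by norm_num) hα0.le
  have h8_10 : (8 : ℝ) ^ α < 10 ^ α := rpow_lt_rpow (by norm_num) (by norm_num) hα0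
  have h8_17 : (8 : ℝ) ^ α < 17 ^ α := rpow_lt_rpow (by norm_num) (by norm_num) hα0
  linarith

theorem stmt_5 (α : ℝ) (hα0 : 0 < α) (hα1 : α < 1) :
    (10 : ℝ) ^ α - 5 ^ α + 2 * 13 ^ α + 2 * 8 ^ α - 3 * 20 ^ α - 17 ^ α < 0 :=
  stmt_5_general α hα0
end

section
/- For every α with 0 < α < 1, the inequality 2·(10^α − 17^α) + 2·(13^α − 20^α) + 10^α − 5^α < 0 holds. -/
open Real

theorem stmt_10 (α : ℝ) (hα0 : 0 < α) (hα1 : α < 1) :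
    2 * ((10 : ℝ) ^ α - 17 ^ α) + 2 * ((13 : ℝ) ^ α - 20 ^ α) + 10 ^ α - 5 ^ α < 0 := by
  have h2 : (1 : ℝ) < (2 : ℝ) ^ α :=
    (Real.one_lt_rpow_iff_of_pos (by norm_num)).mpr (Or.inl ⟨one_lt_two, hα0⟩)
  have h5 : (0 : ℝ) < (5 : ℝ) ^ α := Real.rpow_pos_of_pos (by norm_num) α
  have e1 : (10 : ℝ) ^ α = 5 ^ α * 2 ^ α := by
    rw [← Real.mul_rpow (by norm_num) (by norm_num)]; norm_num
  have e2 : (20 : ℝ) ^ α = 10 ^ α * 2 ^ α := by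
    rw [← Real.mul_rpow (by norm_num) (by norm_num)]; norm_num
  have h13 : (13 : ℝ) ^ α ≤ 17 ^ α :=
    Real.rpow_le_rpow (by norm_num) (by norm_num) hα0.le
  nlinarith [h2, h5, e1, e2, h13, mul_pos h5 (sub_pos.mpr h2)]
end

section
/- For 0 < α < 1, the function f₁(x) = (x−1)((x+1)² + 1)^α + 2((x+1)² + 4)^α − (x−1)(x² + 1)^α − (x² + 4)^α is strictly increasing on [1, ∞). -/
open Real

/-!
Write `A = (x+1)² + 1`, `B = x² + 1`, `C = (x+1)² + 4`, `D = x² + 4`. By concavity of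
`t ↦ t ^ α`, `A ^ α - B ^ α` is at least its tangent-line value `α A^(α-1) (2x + 1)`, so the
derivative is at least
`α ((2x² + 2x - 1) A^(α-1) - (2x² - 2x) B^(α-1)) + 2α (2(x+1) C^(α-1) - x D^(α-1))`.
Both brackets are positive because `B^(α-1) / A^(α-1) = (A / B)^(1-α) ≤ A / B` (and likewise
for `C, D`), which reduces them to polynomial inequalities in `x`.
-/

lemma mul_sub_le_rpow_sub_rpow {α a b : ℝ} (hα0 : 0 ≤ α) (hα1 : α ≤ 1) (ha : 0 < a)
    (hb : 0 ≤ b) : α * a ^ (α - 1) * (a - b) ≤ a ^ α - b ^ α := by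
  have hbern := rpow_one_add_le_one_add_mul_self (s := b / a - 1)
    (by linarith [div_nonneg hb ha.le]) hα0 hα1
  rw [add_sub_cancel, div_rpow hb ha.le, div_le_iff₀ (rpow_pos_of_pos ha α)] at hbern
  have htangent : (1 + α * (b / a - 1)) * a ^ α = a ^ α - α * a ^ (α - 1) * (a - b) := by
    rw [rpow_sub_one ha.ne']
    field_simp
    ring
  linarith

lemma mul_rpow_sub_one_lt_mul_rpow_sub_one {α a b p q : ℝ} (hα : 0 ≤ α) (hb : 0 < b)
    (hba : b ≤ a) (hp : 0 ≤ p) (h : p * a < q * b) :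
    p * b ^ (α - 1) < q * a ^ (α - 1) := by
  have ha : 0 < a := hb.trans_le hba
  have hpow : b ^ α ≤ a ^ α := rpow_le_rpow hb.le hba hα
  rw [rpow_sub_one hb.ne', rpow_sub_one ha.ne', ← mul_div_assoc, ← mul_div_assoc,
    div_lt_div_iff₀ hb ha]
  calc p * b ^ α * a ≤ a ^ α * (p * a) := by nlinarith [mul_nonneg hp ha.le]
    _ < a ^ α * (q * b) := mul_lt_mul_of_pos_left h (rpow_pos_of_pos ha α)
    _ = q * a ^ α * b := by ring

noncomputable def f₁ (α x : ℝ) : ℝ :=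
  (x - 1) * ((x + 1) ^ 2 + 1) ^ α + 2 * ((x + 1) ^ 2 + 4) ^ α
    - (x - 1) * (x ^ 2 + 1) ^ α - (x ^ 2 + 4) ^ α

noncomputable def f₁' (α x : ℝ) : ℝ :=
  ((x + 1) ^ 2 + 1) ^ α - (x ^ 2 + 1) ^ α
    + 2 * α * (x - 1) * ((x + 1) * ((x + 1) ^ 2 + 1) ^ (α - 1) - x * (x ^ 2 + 1) ^ (α - 1))
    + 2 * α * (2 * (x + 1) * ((x + 1) ^ 2 + 4) ^ (α - 1) - x * (x ^ 2 + 4) ^ (α - 1))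

lemma hasDerivAt_rpow_sq_add {α c d : ℝ} (hd : 0 < d) (x : ℝ) :
    HasDerivAt (fun y => ((y + c) ^ 2 + d) ^ α)
      (2 * α * (x + c) * ((x + c) ^ 2 + d) ^ (α - 1)) x := by
  have hsq : HasDerivAt (fun y => (y + c) ^ 2 + d) (2 * (x + c)) x := by
    simpa using (((hasDerivAt_id x).add_const c).pow 2).add_const d
  convert hsq.rpow_const (p := α) (Or.inl (by positivity)) using 1
  ring

lemma hasDerivAt_f₁ (α x : ℝ) : HasDerivAt (f₁ α) (f₁' α x) x := by
  have hA := hasDerivAt_rpow_sq_add (α := α) (c := 1) one_pos x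
  have hC := hasDerivAt_rpow_sq_add (α := α) (c := 1) four_pos x
  have hB := hasDerivAt_rpow_sq_add (α := α) (c := 0) one_pos x
  have hD := hasDerivAt_rpow_sq_add (α := α) (c := 0) four_pos x
  simp only [add_zero] at hB hD
  have hlin := (hasDerivAt_id' x).sub_const 1
  exact ((((hlin.mul hA).add (hC.const_mul 2)).sub (hlin.mul hB)).sub hD).congr_deriv
    (by unfold f₁'; ring)

lemma f₁'_pos {α x : ℝ} (hα0 : 0 < α) (hα1 : α < 1) (hx : 1 < x) : 0 < f₁' α x := by
  have htangent := mul_sub_le_rpow_sub_rpow (a := (x + 1) ^ 2 + 1) (b := x ^ 2 + 1)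
    hα0.le hα1.le (by positivity) (by positivity)
  have hAB := mul_rpow_sub_one_lt_mul_rpow_sub_one (α := α) (a := (x + 1) ^ 2 + 1)
    (b := x ^ 2 + 1) (p := 2 * x ^ 2 - 2 * x) (q := 2 * x ^ 2 + 2 * x - 1) hα0.le
    (by positivity) (by nlinarith) (by nlinarith) (by nlinarith)
  have hCD := mul_rpow_sub_one_lt_mul_rpow_sub_one (α := α) (a := (x + 1) ^ 2 + 4)
    (b := x ^ 2 + 4) (p := x) (q := 2 * (x + 1)) hα0.le
    (by positivity) (by nlinarith) (by linarith) (by nlinarith)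
  have hABgap := mul_pos hα0 (sub_pos.2 hAB)
  have hCDgap := mul_pos hα0 (sub_pos.2 hCD)
  unfold f₁'
  linarith

theorem stmt_12 (α : ℝ) (hα0 : 0 < α) (hα1 : α < 1) :
    StrictMonoOn (fun x : ℝ =>
      (x - 1) * ((x + 1) ^ 2 + 1) ^ α + 2 * ((x + 1) ^ 2 + 4) ^ α
        - (x - 1) * (x ^ 2 + 1) ^ α - (x ^ 2 + 4) ^ α) (Set.Ici 1) := by
  refine strictMonoOn_of_hasDerivWithinAt_pos (f' := f₁' α) (convex_Ici 1)
    (fun x _ => (hasDerivAt_f₁ α x).continuousAt.continuousWithinAt)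
    (fun x _ => (hasDerivAt_f₁ α x).hasDerivWithinAt) fun x hx => ?_
  rw [interior_Ici] at hx
  exact f₁'_pos hα0 hα1 hx
end

section
/- For 0 < α < 1, the function f(x) = (x−2)(x² + 1)^α + 2(x² + 4)^α − 2((x−1)² + 4)^α − (x−3)((x−1)² + 1)^α is strictly increasing on [3, ∞). -/
/-!
The function is `F x - F (x - 1)` for `F t = (t - 2)(t² + 1)^α + 2(t² + 4)^α`, so it increases
on `[3, ∞)` as soon as `F` is strictly convex on `[2, ∞)`. There
`F'' = 2α P (t² + 1)^(α - 2) + 4α Q (t² + 4)^(α - 2)` with `P > 0` and `P + 2Q > 0`; since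
`(t² + 4)^(α - 2) ≤ (t² + 1)^(α - 2)`, this is positive whatever the sign of `Q`.
-/

open Real Set

theorem StrictConvexOn.strictMonoOn_sub_comp_sub {𝕜 : Type*} [Field 𝕜] [LinearOrder 𝕜]
    [IsStrictOrderedRing 𝕜] {f : 𝕜 → 𝕜} {a c : 𝕜} (hf : StrictConvexOn 𝕜 (Ici a) f)
    (hc : 0 < c) : StrictMonoOn (fun x => f x - f (x - c)) (Ici (a + c)) := by
  intro x hx y hy hxy
  simp only [mem_Ici] at hx hy
  have hx' : x - c ∈ Ici a := by simp only [mem_Ici]; linarith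
  have hxa : x ∈ Ici a := by simp only [mem_Ici]; linarith
  have hya : y ∈ Ici a := by simp only [mem_Ici]; linarith
  have hy' : y - c ∈ Ici a := by simp only [mem_Ici]; linarith
  -- three chords: slope on [x - c, x] < slope on [x - c, y] < slope on [y - c, y]
  have left := hf.secant_strict_mono hx' hxa hya (by linarith) (by linarith) hxy
  have right := hf.secant_strict_mono hya hx' hy' (by linarith) (by linarith) (by linarith)
  have hmid : (f (x - c) - f y) / (x - c - y) = (f y - f (x - c)) / (y - (x - c)) := by
    rw [← neg_sub (f y), ← neg_sub y, neg_div_neg_eq]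
  have hright : (f (y - c) - f y) / (y - c - y) = (f y - f (y - c)) / c := by
    rw [← neg_sub (f y), show y - c - y = -c by ring, neg_div_neg_eq]
  rw [sub_sub_cancel] at left
  rw [hmid, hright] at right
  exact (div_lt_div_iff_of_pos_right hc).1 (left.trans right)

theorem hasDerivAt_sq_add_rpow {c : ℝ} (hc : 0 < c) (α t : ℝ) :
    HasDerivAt (fun t => (t ^ 2 + c) ^ α) (2 * t * α * (t ^ 2 + c) ^ (α - 1)) t := by
  have hbase : HasDerivAt (fun t : ℝ => t ^ 2 + c) (2 * t) t := by
    simpa using (hasDerivAt_pow 2 t).add_const c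
  exact hbase.rpow_const (Or.inl (by positivity))

/-- The general Sombor contribution `∑ (d_u² + d_v²) ^ α` of the edges at a vertex of degree `t`
whose neighbours are `t - 2` pendant vertices and two vertices of degree `2`. -/
noncomputable def somborHub (α t : ℝ) : ℝ := (t - 2) * (t ^ 2 + 1) ^ α + 2 * (t ^ 2 + 4) ^ α

noncomputable def somborHubDeriv (α t : ℝ) : ℝ :=
  (t ^ 2 + 1) ^ α + 2 * α * t * (t - 2) * (t ^ 2 + 1) ^ (α - 1)
    + 4 * α * t * (t ^ 2 + 4) ^ (α - 1)

noncomputable def somborHubDeriv2 (α t : ℝ) : ℝ :=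
  2 * α * (t ^ 2 + 1) ^ (α - 2) * ((2 * α + 1) * t ^ 3 + (2 - 4 * α) * t ^ 2 + 3 * t - 2)
    + 4 * α * (t ^ 2 + 4) ^ (α - 2) * ((2 * α - 1) * t ^ 2 + 4)

theorem hasDerivAt_somborHub (α t : ℝ) : HasDerivAt (somborHub α) (somborHubDeriv α t) t := by
  have h := (((hasDerivAt_id t).sub_const 2).mul (hasDerivAt_sq_add_rpow one_pos α t)).add
    ((hasDerivAt_sq_add_rpow four_pos α t).const_mul 2)
  refine h.congr_deriv ?_
  simp only [somborHubDeriv, id_eq]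
  ring

theorem hasDerivAt_somborHubDeriv (α t : ℝ) :
    HasDerivAt (somborHubDeriv α) (somborHubDeriv2 α t) t := by
  have hlin : HasDerivAt (fun t : ℝ => 2 * α * t * (t - 2)) (2 * α * (2 * t - 2)) t := by
    have h := ((hasDerivAt_id t).const_mul (2 * α)).mul ((hasDerivAt_id t).sub_const 2)
    refine h.congr_deriv ?_
    simp only [id_eq]
    ring
  have h := ((hasDerivAt_sq_add_rpow one_pos α t).add
    (hlin.mul (hasDerivAt_sq_add_rpow one_pos (α - 1) t))).add
    (((hasDerivAt_id t).const_mul (4 * α)).mul (hasDerivAt_sq_add_rpow four_pos (α - 1) t))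
  refine h.congr_deriv ?_
  have hpow {c : ℝ} (hc : 0 < c) :
      (t ^ 2 + c) ^ (α - 1) = (t ^ 2 + c) ^ (α - 2) * (t ^ 2 + c) := by
    rw [← rpow_add_one (by positivity)]
    ring_nf
  simp only [somborHubDeriv2, id_eq, show α - 1 - 1 = α - 2 by ring, hpow one_pos, hpow four_pos]
  ring

theorem somborHubDeriv2_pos {α t : ℝ} (hα0 : 0 < α) (hα2 : α ≤ 2) (ht : 2 ≤ t) :
    0 < somborHubDeriv2 α t := by
  set U := (t ^ 2 + 1) ^ (α - 2)
  set V := (t ^ 2 + 4) ^ (α - 2)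
  set P := (2 * α + 1) * t ^ 3 + (2 - 4 * α) * t ^ 2 + 3 * t - 2
  set Q := (2 * α - 1) * t ^ 2 + 4
  have hU : 0 < U := by positivity
  have hV : 0 < V := by positivity
  have hVU : V ≤ U := rpow_le_rpow_of_nonpos (by positivity) (by linarith) (by linarith)
  have hP : 0 < P := by
    nlinarith [mul_nonneg (mul_nonneg hα0.le (sq_nonneg t)) (sub_nonneg.2 ht),
      mul_nonneg (sq_nonneg t) (sub_nonneg.2 ht)]
  have hPQ : 0 < P + 2 * Q := by
    have : 0 < t ^ 3 := by positivity
    nlinarith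
  rcases le_or_gt 0 Q with hQ | hQ
  · have := mul_pos (mul_pos hα0 hU) hP
    have := mul_nonneg (mul_nonneg hα0.le hV.le) hQ
    simp only [somborHubDeriv2]
    linarith
  · -- `V ≤ U` bounds the negative second term below by `4α U Q`
    have hUV : U * Q ≤ V * Q := mul_le_mul_of_nonpos_right hVU hQ.le
    calc 0 < 2 * α * U * (P + 2 * Q) := by positivity
      _ ≤ somborHubDeriv2 α t := by simp only [somborHubDeriv2]; nlinarith

theorem strictMonoOn_somborHubDeriv {α : ℝ} (hα0 : 0 < α) (hα2 : α ≤ 2) :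
    StrictMonoOn (somborHubDeriv α) (Ici 2) := by
  refine strictMonoOn_of_deriv_pos (convex_Ici 2)
    (fun t _ => (hasDerivAt_somborHubDeriv α t).continuousAt.continuousWithinAt) ?_
  intro t ht
  rw [interior_Ici] at ht
  rw [(hasDerivAt_somborHubDeriv α t).deriv]
  exact somborHubDeriv2_pos hα0 hα2 (le_of_lt ht)

theorem strictConvexOn_somborHub {α : ℝ} (hα0 : 0 < α) (hα2 : α ≤ 2) :
    StrictConvexOn ℝ (Ici 2) (somborHub α) := by
  have hderiv : deriv (somborHub α) = somborHubDeriv α :=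
    funext fun t => (hasDerivAt_somborHub α t).deriv
  refine StrictMonoOn.strictConvexOn_of_deriv (convex_Ici 2)
    (fun t _ => (hasDerivAt_somborHub α t).continuousAt.continuousWithinAt) ?_
  rw [hderiv]
  exact (strictMonoOn_somborHubDeriv hα0 hα2).mono interior_subset

theorem stmt_14 (α : ℝ) (hα0 : 0 < α) (hα1 : α < 1) :
    StrictMonoOn (fun x : ℝ =>
      (x - 2) * (x ^ 2 + 1) ^ α + 2 * (x ^ 2 + 4) ^ α
        - 2 * ((x - 1) ^ 2 + 4) ^ α - (x - 3) * ((x - 1) ^ 2 + 1) ^ α) (Set.Ici 3) := by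
  have hf : (fun x : ℝ => (x - 2) * (x ^ 2 + 1) ^ α + 2 * (x ^ 2 + 4) ^ α
      - 2 * ((x - 1) ^ 2 + 4) ^ α - (x - 3) * ((x - 1) ^ 2 + 1) ^ α)
      = fun x => somborHub α x - somborHub α (x - 1) := by
    funext x
    simp only [somborHub]
    ring
  rw [hf, show (3 : ℝ) = 2 + 1 by norm_num]
  exact (strictConvexOn_somborHub hα0 (by linarith)).strictMonoOn_sub_comp_sub one_pos
end
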